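/- Let p(0) = 1 and, for n ≥ 1, p(2n) = (1/2)[P_{n-1}(0)^2 + P_n(0)^2] with p(2n+1) = 0 (odd-index terms vanish). Then for real z with 0 ≤ z < 1, ∑_{n=0}^{∞} p(n) z^n = ((1+z²)/π) K(z²) + 1/2, where K is the complete elliptic integral of the first kind. -/

import Mathlib

/-!
The values of the Legendre polynomials at the origin are `P_{2m}(0) = (-1)^m c_m` and
`P_{2m+1}(0) = 0`, where `c_m = binom(2m, m) / 4^m`: by Rodrigues' formula `n! P_n(0)` is the
`n`-th Taylor coefficient at `1/2` of `(X (1 - X))^n = (1/4 - (X - 1/2)^2)^n`. The `c_m` are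
also the coefficients of `(1 - x)^(-1/2)` and, by Wallis, `(2/π) ∫_0^{π/2} sin^{2m} = c_m`, so
expanding the integrand of `K` termwise gives `∑ P_n(0)^2 w^n = (2/π) K(w)`. Since `p(2n)` is the
mean of `P_{n-1}(0)^2` and `P_n(0)^2`, its generating function in `w = z^2` is `(1 + w)/2` times
that series, plus `1/2` from `p(0) = 1`.
-/

open Finset

/-- Jacobi polynomial `P^{(α,β)}_n(x)` defined via the terminating
hypergeometric representation
`P^{(α,β)}_n(x) = (Γ(n+α+1)/(Γ(n+1)Γ(α+1))) ₂F₁(-n, n+α+β+1; α+1; (1-x)/2)`. -/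
noncomputable def jacobiP (α β : ℝ) (n : ℕ) (x : ℝ) : ℝ :=
  (Real.Gamma (n + α + 1) / (Real.Gamma (n + 1) * Real.Gamma (α + 1))) *
    ∑ k ∈ Finset.range (n + 1),
      (-1 : ℝ) ^ k * (n.choose k) *
        ((ascPochhammer ℝ k).eval (n + α + β + 1) / (ascPochhammer ℝ k).eval (α + 1)) *
        ((1 - x) / 2) ^ k

/-- Legendre polynomial, normalized so that `P_n(1) = 1`. -/
noncomputable def legendreP (n : ℕ) (x : ℝ) : ℝ := jacobiP 0 0 n x

/-- Complete elliptic integral of the first kind. -/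
noncomputable def ellipticK (k : ℝ) : ℝ :=
  ∫ θ in (0 : ℝ)..(Real.pi / 2), 1 / Real.sqrt (1 - k ^ 2 * Real.sin θ ^ 2)

/-- Return probability  of the 1D Hadamard walk at time . -/
noncomputable def hadamardReturnProbTime (n : ℕ) : ℝ :=
  if n = 0 then 1
  else if n % 2 = 0 then (1 / 2) * (legendreP (n / 2 - 1) 0 ^ 2 + legendreP (n / 2) 0 ^ 2)
  else 0

open Real Polynomial

noncomputable def centralBinomRatio (m : ℕ) : ℝ := m.centralBinom / 4 ^ m

lemma centralBinomRatio_zero : centralBinomRatio 0 = 1 := by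
  simp [centralBinomRatio]

lemma centralBinomRatio_nonneg (m : ℕ) : 0 ≤ centralBinomRatio m := by
  unfold centralBinomRatio; positivity

lemma centralBinomRatio_le_one (m : ℕ) : centralBinomRatio m ≤ 1 := by
  unfold centralBinomRatio
  rw [div_le_one (by positivity)]
  exact_mod_cast Nat.centralBinom_le_four_pow m

lemma centralBinomRatio_succ (m : ℕ) :
    centralBinomRatio (m + 1) = centralBinomRatio m * ((2 * m + 1) / (2 * m + 2)) := by
  have h : ((m + 1 : ℕ) : ℝ) * (m + 1).centralBinom = 2 * (2 * m + 1) * m.centralBinom := by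
    exact_mod_cast Nat.succ_mul_centralBinom_succ m
  unfold centralBinomRatio
  push_cast at h
  field_simp
  rw [pow_succ]
  linear_combination 2 * (4 : ℝ) ^ m * h

lemma ascPochhammer_eval_half (m : ℕ) :
    (ascPochhammer ℝ m).eval (1 / 2) = m.factorial * centralBinomRatio m := by
  induction m with
  | zero => simp [centralBinomRatio]
  | succ m ih =>
    rw [ascPochhammer_succ_eval, ih, centralBinomRatio_succ, Nat.factorial_succ]
    push_cast
    field_simp
    ring

lemma multichoose_half (m : ℕ) : Ring.multichoose (1 / 2 : ℝ) m = centralBinomRatio m := by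
  have h := Ring.factorial_nsmul_multichoose_eq_ascPochhammer (1 / 2 : ℝ) m
  rw [ascPochhammer_smeval_eq_eval, ascPochhammer_eval_half, nsmul_eq_mul] at h
  exact mul_left_cancel₀ (by positivity) h

lemma hasSum_centralBinomRatio_mul_pow {x : ℝ} (hx : |x| < 1) :
    HasSum (fun m => centralBinomRatio m * x ^ m) (1 / √(1 - x)) := by
  have h := (one_div_one_sub_rpow_hasFPowerSeriesOnBall_zero (1 / 2 : ℝ)).hasSum
    (y := x) (by simpa [edist_dist] using hx)
  simp only [FormalMultilinearSeries.ofScalars_apply_eq, zero_add, ← Ring.multichoose_eq,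
    multichoose_half, smul_eq_mul] at h
  rw [sqrt_eq_rpow]
  simpa [mul_comm] using h

lemma integral_sin_pow_two_mul (m : ℕ) :
    ∫ θ in (0 : ℝ)..π / 2, sin θ ^ (2 * m) = π / 2 * centralBinomRatio m := by
  induction m with
  | zero => simp [centralBinomRatio]
  | succ m ih =>
    rw [mul_add_one, integral_sin_pow, ih, centralBinomRatio_succ, sin_zero, cos_pi_div_two,
      zero_pow (Nat.succ_ne_zero _), zero_mul, mul_zero, sub_zero, zero_div, zero_add]
    push_cast
    ring

lemma hasSum_ellipticK {k : ℝ} (hk : |k| < 1) :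
    HasSum (fun m => π / 2 * (centralBinomRatio m ^ 2 * (k ^ 2) ^ m)) (ellipticK k) := by
  have hk2 : k ^ 2 < 1 := by rwa [sq_lt_one_iff_abs_lt_one]
  have hle (θ : ℝ) : k ^ 2 * sin θ ^ 2 ≤ k ^ 2 :=
    mul_le_of_le_one_right (sq_nonneg k) (sin_sq_le_one θ)
  have hterm (m : ℕ) : ∫ θ in (0 : ℝ)..π / 2, centralBinomRatio m * (k ^ 2 * sin θ ^ 2) ^ m
      = π / 2 * (centralBinomRatio m ^ 2 * (k ^ 2) ^ m) := by
    simp_rw [mul_pow, ← pow_mul, intervalIntegral.integral_const_mul, integral_sin_pow_two_mul]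
    ring
  simp_rw [← hterm]
  refine intervalIntegral.hasSum_integral_of_dominated_convergence
    (fun m _ => centralBinomRatio m * (k ^ 2) ^ m) (fun m => by fun_prop) (fun m => ?_) ?_
    intervalIntegrable_const ?_
  · refine .of_forall fun θ _ => ?_
    rw [norm_mul, norm_pow, norm_of_nonneg (centralBinomRatio_nonneg m)]
    refine mul_le_mul_of_nonneg_left ?_ (centralBinomRatio_nonneg m)
    rw [norm_of_nonneg (by positivity)]
    exact pow_le_pow_left₀ (by positivity) (hle θ) m
  · exact .of_forall fun θ _ =>
      (summable_geometric_of_lt_one (by positivity) hk2).of_nonneg_of_le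
        (fun m => by have := centralBinomRatio_nonneg m; positivity)
        (fun m => mul_le_of_le_one_left (by positivity) (centralBinomRatio_le_one m))
  · refine .of_forall fun θ _ => hasSum_centralBinomRatio_mul_pow ?_
    rw [abs_of_nonneg (by positivity)]
    exact (hle θ).trans_lt hk2

lemma ascPochhammer_eval_natCast_add_one {R : Type*} [CommSemiring R] (n k : ℕ) :
    (ascPochhammer R k).eval ((n : R) + 1) = (n + k).choose n * k.factorial := by
  rw [← Nat.cast_add_one, ← ascPochhammer_eval_cast, ascPochhammer_nat_eq_ascFactorial,
    Nat.ascFactorial_eq_factorial_mul_choose, Nat.choose_symm_add]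
  push_cast
  ring

lemma aeval_shiftedLegendre {R : Type*} [CommRing R] (n : ℕ) (y : R) :
    aeval y (shiftedLegendre n) =
      ∑ k ∈ range (n + 1), (-1) ^ k * n.choose k * (n + k).choose n * y ^ k := by
  simp [shiftedLegendre]

lemma legendreP_eq_aeval_shiftedLegendre (n : ℕ) (x : ℝ) :
    legendreP n x = aeval ((1 - x) / 2) (shiftedLegendre n) := by
  rw [aeval_shiftedLegendre, legendreP, jacobiP]
  simp only [add_zero, zero_add, Gamma_one, mul_one]
  rw [div_self (Gamma_pos_of_pos (by positivity)).ne', one_mul]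
  refine sum_congr rfl fun k _ => ?_
  rw [ascPochhammer_eval_natCast_add_one, ascPochhammer_eval_one,
    mul_div_cancel_right₀ _ (by positivity)]

lemma coeff_X_sq_add_C_pow_self {R : Type*} [CommSemiring R] (a : R) (n : ℕ) :
    ((X ^ 2 + C a) ^ n).coeff n = if Even n then a ^ (n / 2) * n.choose (n / 2) else 0 := by
  have h : (X ^ 2 + C a) ^ n = expand R 2 ((X + C a) ^ n) := by simp
  simp only [h, coeff_expand two_pos, coeff_X_add_C_pow, even_iff_two_dvd]
  split_ifs with hn
  · rw [show n - n / 2 = n / 2 by omega]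
  · rfl

lemma aeval_iterate_derivative {R A : Type*} [CommRing R] [CommRing A] [Algebra R A]
    (p : R[X]) (x : A) (n : ℕ) :
    aeval x (derivative^[n] p) = n.factorial * (taylor x (p.map (algebraMap R A))).coeff n := by
  rw [aeval_def, ← eval_map, ← iterate_derivative_map, ← factorial_smul_hasseDeriv,
    taylor_coeff]
  simp

lemma taylor_half_X_pow_mul_one_sub_X_pow {K : Type*} [Field K] [CharZero K] (n : ℕ) :
    taylor (2⁻¹ : K) (X ^ n * (1 - X) ^ n) = C ((-1) ^ n) * (X ^ 2 + C (-4⁻¹)) ^ n := by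
  have h1 : (1 : K[X]) = C 2⁻¹ + C 2⁻¹ := by rw [← C_add, ← C_1]; congr 1; norm_num
  have h4 : C (-4⁻¹ : K) = -(C 2⁻¹ * C 2⁻¹) := by
    rw [← C_mul, ← C_neg]; congr 1; norm_num
  rw [taylor_apply, mul_comp, X_pow_comp, pow_comp, sub_comp, one_comp, X_comp, ← mul_pow,
    C_pow, C_neg, C_1, ← mul_pow, h4]
  congr 1
  linear_combination (X + C 2⁻¹) * h1

lemma aeval_half_shiftedLegendre {K : Type*} [Field K] [CharZero K] (n : ℕ) :
    aeval (2⁻¹ : K) (shiftedLegendre n) =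
      (-1) ^ n * ((X ^ 2 + C (-4⁻¹ : K)) ^ n).coeff n := by
  have hR := congrArg (aeval (2⁻¹ : K)) (factorial_mul_shiftedLegendre_eq n)
  rw [map_mul, map_natCast, aeval_iterate_derivative] at hR
  simp only [Polynomial.map_mul, Polynomial.map_pow, Polynomial.map_sub, Polynomial.map_one, map_X,
    taylor_half_X_pow_mul_one_sub_X_pow, coeff_C_mul] at hR
  exact mul_left_cancel₀ (Nat.cast_ne_zero.mpr n.factorial_ne_zero) hR

lemma legendreP_two_mul_zero (m : ℕ) : legendreP (2 * m) 0 = (-1) ^ m * centralBinomRatio m := by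
  rw [legendreP_eq_aeval_shiftedLegendre, show ((1 : ℝ) - 0) / 2 = 2⁻¹ by norm_num,
    aeval_half_shiftedLegendre, coeff_X_sq_add_C_pow_self, if_pos (even_two_mul m),
    Nat.mul_div_cancel_left m two_pos, centralBinomRatio, Nat.centralBinom_eq_two_mul_choose,
    pow_mul, neg_one_sq, one_pow, one_mul, neg_pow, inv_pow]
  ring

lemma legendreP_two_mul_add_one_zero (m : ℕ) : legendreP (2 * m + 1) 0 = 0 := by
  rw [legendreP_eq_aeval_shiftedLegendre, show ((1 : ℝ) - 0) / 2 = 2⁻¹ by norm_num,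
    aeval_half_shiftedLegendre, coeff_X_sq_add_C_pow_self, if_neg (Nat.not_even_two_mul_add_one m),
    mul_zero]

lemma hasSum_legendreP_zero_sq_mul_pow {w : ℝ} (hw : |w| < 1) :
    HasSum (fun n => legendreP n 0 ^ 2 * w ^ n) (2 / π * ellipticK w) := by
  have heven : HasSum (fun m => legendreP (2 * m) 0 ^ 2 * w ^ (2 * m)) (2 / π * ellipticK w) := by
    refine ((hasSum_ellipticK hw).mul_left (2 / π)).congr_fun fun m => ?_
    rw [legendreP_two_mul_zero, mul_pow, ← pow_mul, ← pow_mul, mul_comm m 2, pow_mul, pow_mul,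
      neg_one_sq, one_pow, one_mul]
    field_simp
  have hodd : HasSum (fun m => legendreP (2 * m + 1) 0 ^ 2 * w ^ (2 * m + 1)) 0 := by
    simp [legendreP_two_mul_add_one_zero]
  simpa only [add_zero] using
    HasSum.even_add_odd (f := fun n => legendreP n 0 ^ 2 * w ^ n) heven hodd

lemma hadamardReturnProbTime_two_mul_add_one (n : ℕ) :
    hadamardReturnProbTime (2 * n + 1) = 0 := by
  simp [hadamardReturnProbTime, Nat.add_mod]

lemma hadamardReturnProbTime_two_mul_add_two (n : ℕ) :
    hadamardReturnProbTime (2 * (n + 1)) = (legendreP n 0 ^ 2 + legendreP (n + 1) 0 ^ 2) / 2 := by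
  rw [hadamardReturnProbTime, if_neg (by omega), if_pos (by omega),
    Nat.mul_div_cancel_left _ two_pos, Nat.add_sub_cancel]
  ring

lemma hasSum_hadamardReturnProbTime_two_mul {w : ℝ} (hw : |w| < 1) :
    HasSum (fun n => hadamardReturnProbTime (2 * n) * w ^ n)
      ((1 + w) / π * ellipticK w + 1 / 2) := by
  set u : ℕ → ℝ := fun n => legendreP n 0 ^ 2 * w ^ n
  have hu : HasSum u (2 / π * ellipticK w) := hasSum_legendreP_zero_sq_mul_pow hw
  have hP0 : legendreP 0 0 = 1 := by
    simpa [centralBinomRatio_zero] using legendreP_two_mul_zero 0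
  have hu_succ : HasSum (fun n => u (n + 1)) (2 / π * ellipticK w - 1) := by
    simpa [u, hP0] using (hasSum_nat_add_iff' 1).mpr hu
  have htail : HasSum (fun n => hadamardReturnProbTime (2 * (n + 1)) * w ^ (n + 1))
      (w / 2 * (2 / π * ellipticK w) + (2 / π * ellipticK w - 1) / 2) := by
    refine ((hu.mul_left (w / 2)).add (hu_succ.div_const 2)).congr_fun fun n => ?_
    simp only [u, hadamardReturnProbTime_two_mul_add_two]
    ring
  convert HasSum.zero_add (f := fun n => hadamardReturnProbTime (2 * n) * w ^ n) htail using 1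
  rw [mul_zero, hadamardReturnProbTime, if_pos rfl, pow_zero]
  field_simp
  ring

theorem hadamard_return_genfun (z : ℝ) (h0 : 0 ≤ z) (h1 : z < 1) :
    ∑' n : ℕ, hadamardReturnProbTime n * z ^ n =
      ((1 + z ^ 2) / Real.pi) * ellipticK (z ^ 2) + 1 / 2 := by
  have hz : |z ^ 2| < 1 := by
    rw [abs_of_nonneg (sq_nonneg z)]
    exact pow_lt_one₀ h0 h1 two_ne_zero
  have heven : HasSum (fun n => hadamardReturnProbTime (2 * n) * z ^ (2 * n))
      ((1 + z ^ 2) / π * ellipticK (z ^ 2) + 1 / 2) := by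
    simpa only [pow_mul] using hasSum_hadamardReturnProbTime_two_mul hz
  have hodd : HasSum (fun n => hadamardReturnProbTime (2 * n + 1) * z ^ (2 * n + 1)) 0 := by
    simp [hadamardReturnProbTime_two_mul_add_one]
  simpa only [add_zero] using (HasSum.even_add_odd
    (f := fun n => hadamardReturnProbTime n * z ^ n) heven hodd).tsum_eq
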